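/- arXiv:2302.00007 — 7 statements merged into one kernel-verified Lean document; each statement's English description precedes it below -/
import Mathlib

section
/- The presented group ⟨u, s ∣ s⁴ = 1, s² = u³⟩ — the quotient of the free group on two generators u, s by the normal closure of the relators s⁴ and s²·u⁻³ — is isomorphic to SL(2,ℤ) via an isomorphism sending the class of u to U and the class of s to S. -/
/-- The matrix `S = !![0,-1; 1,0]` as an element of `SL(2,ℤ)`. -/
def S : Matrix.SpecialLinearGroup (Fin 2) ℤ :=
  ⟨!![0, -1; 1, 0], by norm_num [Matrix.det_fin_two_of]⟩

/-- The matrix `U = !![0,-1; 1,1]` as an element of `SL(2,ℤ)`. -/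
def U : Matrix.SpecialLinearGroup (Fin 2) ℤ :=
  ⟨!![0, -1; 1, 1], by norm_num [Matrix.det_fin_two_of]⟩

/-- The relators `s⁴` and `s²·u⁻³` in the free group on two generators,
where `false` stands for `u` and `true` stands for `s`. -/
def sl2Rels : Set (FreeGroup Bool) :=
  {(FreeGroup.of true) ^ 4, (FreeGroup.of true) ^ 2 * ((FreeGroup.of false) ^ 3)⁻¹}

/-!
Sending `u ↦ U`, `s ↦ S` respects the relations, and the image contains `S` and
`T = S⁻¹U`, which generate `SL(2,ℤ)`. For injectivity, every element of the presented group
is `uᵃ w sᵇ` with `w` a product of `t = s⁻¹u` and `l = s⁻¹u²`, whose images are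
`T = !![1,1; 0,1]` and `L = !![1,0; 1,1]`. A nonempty product of `T` and `L` has nonnegative
entries, positive diagonal and is not the identity (`IsPositive`), whereas no `Uᵃ Sᵇ` has this
shape; so an element of the kernel has `w = 1`, and the twelve elements `uᵃ sᵇ` are checked
directly.
-/

open scoped MatrixGroups

theorem Submonoid.closure_eq_top_of_isOfFinOrder {G : Type*} [Group G] {T : Set G}
    (hT : Subgroup.closure T = ⊤) (hfin : ∀ x ∈ T, IsOfFinOrder x) :
    Submonoid.closure T = ⊤ := by
  rw [← Subgroup.closure_toSubmonoid_of_isOfFinOrder hfin, hT, Subgroup.top_toSubmonoid]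

namespace SL2ZPresentation

def L : SL(2, ℤ) := ⟨!![1, 0; 1, 1], by norm_num [Matrix.det_fin_two_of]⟩

def IsPositive (A : Matrix (Fin 2) (Fin 2) ℤ) : Prop :=
  1 ≤ A 0 0 ∧ 0 ≤ A 0 1 ∧ 0 ≤ A 1 0 ∧ 1 ≤ A 1 1 ∧ 1 ≤ A 0 1 + A 1 0

instance : DecidablePred IsPositive := fun _ => by unfold IsPositive; infer_instance

theorem IsPositive.mul {A B : Matrix (Fin 2) (Fin 2) ℤ} (hA : IsPositive A)
    (hB : IsPositive B) : IsPositive (A * B) := by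
  obtain ⟨a₀₀, a₀₁, a₁₀, a₁₁, ha⟩ := hA
  obtain ⟨b₀₀, b₀₁, b₁₀, b₁₁, hb⟩ := hB
  simp only [IsPositive, Matrix.mul_apply, Fin.sum_univ_two]
  refine ⟨?_, ?_, ?_, ?_, ?_⟩ <;> nlinarith

theorem not_isPositive_U_pow_mul_S_pow (a b : ℕ) : ¬IsPositive (U ^ a * S ^ b : SL(2, ℤ)) := by
  rw [pow_eq_pow_mod a (by decide : U ^ 6 = 1), pow_eq_pow_mod b (by decide : S ^ 4 = 1)]
  have key : ∀ i < 6, ∀ j < 4, ¬IsPositive (U ^ i * S ^ j : SL(2, ℤ)) := by decide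
  exact key _ (Nat.mod_lt _ (by norm_num)) _ (Nat.mod_lt _ (by norm_num))

local notation "G" => PresentedGroup sl2Rels

def u : G := .of false

def s : G := .of true

theorem s_pow_four : s ^ 4 = 1 :=
  PresentedGroup.one_of_mem (Set.mem_insert _ _)

theorem s_sq : s ^ 2 = u ^ 3 :=
  PresentedGroup.mk_eq_mk_of_mul_inv_mem (Set.mem_insert_of_mem _ rfl)

theorem u_pow_six : u ^ 6 = 1 := by
  rw [show 6 = 3 * 2 from rfl, pow_mul, ← s_sq, ← pow_mul, s_pow_four]

def toSL : G →* SL(2, ℤ) :=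
  PresentedGroup.toGroup (f := fun b => cond b S U) <| by
    rintro r (rfl | rfl) <;> simp <;> decide

theorem toSL_u : toSL u = U := PresentedGroup.toGroup.of _

theorem toSL_s : toSL s = S := PresentedGroup.toGroup.of _

def t : G := s⁻¹ * u

def l : G := s⁻¹ * u ^ 2

theorem toSL_t : toSL t = ModularGroup.T := by
  rw [t, map_mul, map_inv, toSL_u, toSL_s]; decide

theorem toSL_l : toSL l = L := by
  rw [l, map_mul, map_inv, map_pow, toSL_u, toSL_s]; decide

theorem eq_one_or_isPositive_toSL {w : G} (hw : w ∈ Submonoid.closure {t, l}) :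
    w = 1 ∨ IsPositive (toSL w) := by
  induction hw using Submonoid.closure_induction with
  | mem x hx =>
    rcases hx with rfl | rfl
    · exact .inr (toSL_t ▸ by decide)
    · exact .inr (toSL_l ▸ by decide)
  | one => exact .inl rfl
  | mul x y _ _ hx hy =>
    rcases hx with rfl | hx
    · rwa [one_mul]
    rcases hy with rfl | hy
    · rw [mul_one]; exact .inr hx
    rw [map_mul, Matrix.SpecialLinearGroup.coe_mul]
    exact .inr (hx.mul hy)

theorem eq_one_or_s_mul_eq_u_pow_mul {w : G} (hw : w ∈ Submonoid.closure {t, l}) :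
    w = 1 ∨ ∃ i : ℕ, ∃ w' ∈ Submonoid.closure {t, l}, s * w = u ^ i * w' := by
  induction hw using Submonoid.closure_induction_left with
  | one => exact .inl rfl
  | mul_left x hx y hy _ =>
    refine .inr ?_
    rcases hx with rfl | rfl
    · exact ⟨1, y, hy, by rw [t, pow_one, mul_assoc, mul_inv_cancel_left]⟩
    · exact ⟨2, y, hy, by rw [l, mul_assoc, mul_inv_cancel_left]⟩

def normalForms : Set G :=
  {g | ∃ a b : ℕ, ∃ w ∈ Submonoid.closure {t, l}, g = u ^ a * w * s ^ b}

theorem u_pow_mul_mem_normalForms (k : ℕ) {g : G} (hg : g ∈ normalForms) :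
    u ^ k * g ∈ normalForms := by
  obtain ⟨a, b, w, hw, rfl⟩ := hg
  exact ⟨k + a, b, w, hw, by simp only [pow_add, mul_assoc]⟩

theorem s_mul_u_pow_mul_mem_normalForms {r : ℕ} (hr : r < 3) (b : ℕ) {w : G}
    (hw : w ∈ Submonoid.closure {t, l}) : s * (u ^ r * w * s ^ b) ∈ normalForms := by
  interval_cases r
  · rcases eq_one_or_s_mul_eq_u_pow_mul hw with rfl | ⟨i, w', hw', hsw⟩
    · exact ⟨0, b + 1, 1, one_mem _, by simp [pow_succ']⟩
    · exact ⟨i, b, w', hw', by rw [pow_zero, one_mul, ← mul_assoc, hsw]⟩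
  · refine ⟨3, b, t * w, mul_mem (Submonoid.subset_closure (.inl rfl)) hw, ?_⟩
    rw [t, ← s_sq]; group
  · refine ⟨3, b, l * w, mul_mem (Submonoid.subset_closure (.inr rfl)) hw, ?_⟩
    rw [l, ← s_sq]; group

theorem s_mul_mem_normalForms {g : G} (hg : g ∈ normalForms) : s * g ∈ normalForms := by
  obtain ⟨a, b, w, hw, rfl⟩ := hg
  have hcomm : Commute s (u ^ (3 * (a / 3))) := by
    rw [pow_mul, ← s_sq, ← pow_mul]; exact Commute.self_pow s _
  have hsplit :
      s * (u ^ a * w * s ^ b) = u ^ (3 * (a / 3)) * (s * (u ^ (a % 3) * w * s ^ b)) := by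
    conv_lhs => rw [← Nat.div_add_mod a 3, pow_add]
    simp only [← mul_assoc, hcomm.eq]
  rw [hsplit]
  exact u_pow_mul_mem_normalForms _
    (s_mul_u_pow_mul_mem_normalForms (Nat.mod_lt _ (by norm_num)) b hw)

theorem mem_normalForms (g : G) : g ∈ normalForms := by
  have hgen : Submonoid.closure (Set.range (PresentedGroup.of : Bool → G)) = ⊤ := by
    refine Submonoid.closure_eq_top_of_isOfFinOrder (PresentedGroup.closure_range_of _) ?_
    rintro _ ⟨_ | _, rfl⟩
    · exact isOfFinOrder_iff_pow_eq_one.mpr ⟨6, by norm_num, u_pow_six⟩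
    · exact isOfFinOrder_iff_pow_eq_one.mpr ⟨4, by norm_num, s_pow_four⟩
  induction (hgen ▸ Submonoid.mem_top g : g ∈ Submonoid.closure _)
    using Submonoid.closure_induction_left with
  | one => exact ⟨0, 0, 1, one_mem _, by simp⟩
  | mul_left x hx y _ hy =>
    obtain ⟨_ | _, rfl⟩ := hx
    · have := u_pow_mul_mem_normalForms 1 hy
      rwa [pow_one] at this
    · exact s_mul_mem_normalForms hy

theorem eq_one_of_toSL_u_pow_mul_s_pow_eq_one {a b : ℕ} (h : toSL (u ^ a * s ^ b) = 1) :
    u ^ a * s ^ b = 1 := by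
  rw [pow_eq_pow_mod a u_pow_six, pow_eq_pow_mod b s_pow_four] at h ⊢
  rw [map_mul, map_pow, map_pow, toSL_u, toSL_s] at h
  have key : ∀ i < 6, ∀ j < 4, U ^ i * S ^ j = 1 → i = 0 ∧ j = 0 ∨ i = 3 ∧ j = 2 := by decide
  rcases key _ (Nat.mod_lt _ (by norm_num)) _ (Nat.mod_lt _ (by norm_num)) h with
    ⟨ha, hb⟩ | ⟨ha, hb⟩ <;> rw [ha, hb]
  · simp
  · rw [← s_sq, ← pow_add, s_pow_four]

theorem toSL_injective : Function.Injective toSL := by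
  rw [injective_iff_map_eq_one]
  intro g hg
  obtain ⟨a, b, w, hw, rfl⟩ := mem_normalForms g
  rcases eq_one_or_isPositive_toSL hw with rfl | hpos
  · rw [mul_one] at hg ⊢
    exact eq_one_of_toSL_u_pow_mul_s_pow_eq_one hg
  · have hw' : w = u ^ (5 * a) * (u ^ a * w * s ^ b) * s ^ (3 * b) := by
      have hu : u ^ (5 * a) * u ^ a = 1 := by
        rw [← pow_add, show 5 * a + a = 6 * a by ring, pow_mul, u_pow_six, one_pow]
      have hs : s ^ b * s ^ (3 * b) = 1 := by
        rw [← pow_add, show b + 3 * b = 4 * b by ring, pow_mul, s_pow_four, one_pow]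
      simp only [← mul_assoc, hu, one_mul]
      rw [mul_assoc, hs, mul_one]
    rw [hw', map_mul, map_mul, hg, mul_one, map_pow, map_pow, toSL_u, toSL_s] at hpos
    exact (not_isPositive_U_pow_mul_S_pow _ _ hpos).elim

theorem toSL_surjective : Function.Surjective toSL := by
  rw [← MonoidHom.range_eq_top, eq_top_iff, ← SpecialLinearGroup.SL2Z_generators,
    Subgroup.closure_le]
  rintro _ (rfl | rfl)
  · exact ⟨s, toSL_s⟩
  · exact ⟨t, toSL_t⟩

end SL2ZPresentation

/-- The presented group `⟨u, s ∣ s⁴ = 1, s² = u³⟩` is isomorphic to `SL(2,ℤ)`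
via an isomorphism sending (the class of) `u` to `U` and `s` to `S`. -/
theorem sl2z_presentation :
    ∃ Ψ : PresentedGroup sl2Rels ≃* Matrix.SpecialLinearGroup (Fin 2) ℤ,
      Ψ (PresentedGroup.of false) = U ∧ Ψ (PresentedGroup.of true) = S :=
  ⟨MulEquiv.ofBijective SL2ZPresentation.toSL
      ⟨SL2ZPresentation.toSL_injective, SL2ZPresentation.toSL_surjective⟩,
    SL2ZPresentation.toSL_u, SL2ZPresentation.toSL_s⟩
end

section
/- Let φ₁ : ℤ/4ℤ → ℤ/12ℤ be the injective homomorphism sending the generator to 3, and φ₂ : ℤ/4ℤ → ℤ/8ℤ the injective homomorphism sending the generator to 2. Then there is a group isomorphism Ψ from the amalgamated free product (ℤ/12ℤ) *_{ℤ/4ℤ} (ℤ/8ℤ) (the pushout of φ₁ and φ₂) onto the metaplectic group Mp(2,ℤ) such that Ψ(ι₁(1)) = û and Ψ(ι₂(1)) = ŝ, where 1 denotes the distinguished generator of each cyclic factor. -/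
/-- The relators `ŝ⁸` and `ŝ²·û⁻³` in the free group on two generators,
where `false` stands for `û` and `true` stands for `ŝ`. -/
def mpRels : Set (FreeGroup Bool) :=
  {(FreeGroup.of true) ^ 8, (FreeGroup.of true) ^ 2 * ((FreeGroup.of false) ^ 3)⁻¹}

/-- The metaplectic group `Mp(2,ℤ) = ⟨û, ŝ ∣ ŝ⁸ = 1, ŝ² = û³⟩`. -/
abbrev Mp : Type := PresentedGroup mpRels

/-- The generator `û` of `Mp(2,ℤ)`. -/
def uhat : Mp := PresentedGroup.of false

/-- The generator `ŝ` of `Mp(2,ℤ)`. -/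
def shat : Mp := PresentedGroup.of true

/-- The two factors `ℤ/12ℤ` (at `false`) and `ℤ/8ℤ` (at `true`) of the amalgamated
free product, written multiplicatively. -/
def Fac : Bool → Type
  | false => Multiplicative (ZMod 12)
  | true => Multiplicative (ZMod 8)

instance instFacGroup : ∀ b, Group (Fac b)
  | false => inferInstanceAs (Group (Multiplicative (ZMod 12)))
  | true => inferInstanceAs (Group (Multiplicative (ZMod 8)))

/-- The family of amalgamating maps `ℤ/4ℤ → ℤ/12ℤ` and `ℤ/4ℤ → ℤ/8ℤ`. -/
def fam (φ₁ : Multiplicative (ZMod 4) →* Multiplicative (ZMod 12))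
    (φ₂ : Multiplicative (ZMod 4) →* Multiplicative (ZMod 8)) :
    ∀ b, Multiplicative (ZMod 4) →* Fac b
  | false => φ₁
  | true => φ₂

/-! Both groups are presented by `⟨a, b ∣ a¹² = b⁸ = 1, a³ = b²⟩`. For the pushout this is because
`ℤ/4ℤ` is generated by an element sent to `a³` and to `b²`; for `Mp(2,ℤ)` because `a¹² = (a³)⁴ = b⁸`
follows from the other relations. Hence the homomorphisms matching the generators exist in both
directions, and they are mutually inverse since they are so on generators. -/

section ZModPowers

variable {G : Type*} [Group G] {n : ℕ}

def zmodPowersHom (g : G) (hg : g ^ n = 1) : Multiplicative (ZMod n) →* G :=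
  AddMonoidHom.toMultiplicativeLeft <| ZMod.lift n
    ⟨zmultiplesHom (Additive G) (Additive.ofMul g), by
      rw [zmultiplesHom_apply, natCast_zsmul, ← ofMul_pow, hg, ofMul_one]⟩

theorem zmodPowersHom_ofAdd_intCast (g : G) (hg : g ^ n = 1) (m : ℤ) :
    zmodPowersHom g hg (Multiplicative.ofAdd (m : ZMod n)) = g ^ m := by
  simp [zmodPowersHom, ZMod.lift_coe, ← ofMul_zpow]

theorem zmodPowersHom_ofAdd_ofNat (g : G) (hg : g ^ n = 1) (m : ℕ) [m.AtLeastTwo] :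
    zmodPowersHom g hg (Multiplicative.ofAdd (OfNat.ofNat m : ZMod n)) =
      g ^ (OfNat.ofNat m : ℕ) := by
  simpa using zmodPowersHom_ofAdd_intCast g hg (OfNat.ofNat m)

theorem zmodPowersHom_ofAdd_one (g : G) (hg : g ^ n = 1) :
    zmodPowersHom g hg (Multiplicative.ofAdd 1) = g := by
  simpa using zmodPowersHom_ofAdd_intCast g hg 1

theorem MonoidHom.ext_multiplicative_zmod {f f' : Multiplicative (ZMod n) →* G}
    (h : f (Multiplicative.ofAdd 1) = f' (Multiplicative.ofAdd 1)) : f = f' := by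
  refine MonoidHom.ext fun x => ?_
  obtain ⟨m, hm⟩ := ZMod.intCast_surjective (Multiplicative.toAdd x)
  have hx : x = Multiplicative.ofAdd 1 ^ m := by
    rw [← ofAdd_zsmul, zsmul_one, hm, ofAdd_toAdd]
  rw [hx, map_zpow, map_zpow, h]

end ZModPowers

theorem shat_pow_eight : shat ^ 8 = 1 :=
  PresentedGroup.one_of_mem (Set.mem_insert _ _)

theorem shat_sq : shat ^ 2 = uhat ^ 3 :=
  PresentedGroup.mk_eq_mk_of_mul_inv_mem (Set.mem_insert_of_mem _ rfl)

theorem shat_sq_pow_four : (shat ^ 2) ^ 4 = 1 := by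
  rw [← pow_mul]
  exact shat_pow_eight

theorem uhat_pow_twelve : uhat ^ 12 = 1 := by
  rw [show 12 = 3 * 4 by rfl, pow_mul, ← shat_sq]
  exact shat_sq_pow_four

-- Without the ascriptions, `Multiplicative.ofAdd 1 : Fac b` elaborates as the image of
-- `1 : Multiplicative (ZMod _)`, which is the identity.
def Fac.gen : ∀ b, Fac b
  | false => Multiplicative.ofAdd (1 : ZMod 12)
  | true => Multiplicative.ofAdd (1 : ZMod 8)

theorem Fac.hom_ext {G : Type*} [Group G] {b : Bool} {f f' : Fac b →* G}
    (h : f (Fac.gen b) = f' (Fac.gen b)) : f = f' := by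
  cases b
  exacts [MonoidHom.ext_multiplicative_zmod (n := 12) h,
    MonoidHom.ext_multiplicative_zmod (n := 8) h]

def Fac.toMp : ∀ b, Fac b →* Mp
  | false => zmodPowersHom uhat uhat_pow_twelve
  | true => zmodPowersHom shat shat_pow_eight

theorem Fac.toMp_gen (b : Bool) : Fac.toMp b (Fac.gen b) = PresentedGroup.of b := by
  cases b
  exacts [zmodPowersHom_ofAdd_one uhat uhat_pow_twelve,
    zmodPowersHom_ofAdd_one shat shat_pow_eight]

section Pushout

open Monoid

variable {φ₁ : Multiplicative (ZMod 4) →* Multiplicative (ZMod 12)}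
  {φ₂ : Multiplicative (ZMod 4) →* Multiplicative (ZMod 8)}

theorem Fac.toMp_comp_fam
    (h₁ : φ₁ (Multiplicative.ofAdd (1 : ZMod 4)) = Multiplicative.ofAdd (3 : ZMod 12))
    (h₂ : φ₂ (Multiplicative.ofAdd (1 : ZMod 4)) = Multiplicative.ofAdd (2 : ZMod 8))
    (b : Bool) : (Fac.toMp b).comp (fam φ₁ φ₂ b) = zmodPowersHom (shat ^ 2) shat_sq_pow_four := by
  refine MonoidHom.ext_multiplicative_zmod ?_
  rw [MonoidHom.comp_apply, zmodPowersHom_ofAdd_one]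
  cases b
  · exact (congrArg (zmodPowersHom uhat uhat_pow_twelve) h₁).trans
      ((zmodPowersHom_ofAdd_ofNat uhat uhat_pow_twelve 3).trans shat_sq.symm)
  · exact (congrArg (zmodPowersHom shat shat_pow_eight) h₂).trans
      (zmodPowersHom_ofAdd_ofNat shat shat_pow_eight 2)

theorem pushoutI_of_gen_true_sq
    (h₁ : φ₁ (Multiplicative.ofAdd (1 : ZMod 4)) = Multiplicative.ofAdd (3 : ZMod 12))
    (h₂ : φ₂ (Multiplicative.ofAdd (1 : ZMod 4)) = Multiplicative.ofAdd (2 : ZMod 8)) :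
    PushoutI.of (φ := fam φ₁ φ₂) true (Fac.gen true) ^ 2 =
      PushoutI.of (φ := fam φ₁ φ₂) false (Fac.gen false) ^ 3 := by
  have h₁' : Fac.gen false ^ 3 = fam φ₁ φ₂ false (Multiplicative.ofAdd 1) := h₁.symm
  have h₂' : Fac.gen true ^ 2 = fam φ₁ φ₂ true (Multiplicative.ofAdd 1) := h₂.symm
  rw [← map_pow, ← map_pow, h₁', h₂', PushoutI.of_apply_eq_base, PushoutI.of_apply_eq_base]

variable (h₁ : φ₁ (Multiplicative.ofAdd (1 : ZMod 4)) = Multiplicative.ofAdd (3 : ZMod 12))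
  (h₂ : φ₂ (Multiplicative.ofAdd (1 : ZMod 4)) = Multiplicative.ofAdd (2 : ZMod 8))

def pushoutToMp : PushoutI (fam φ₁ φ₂) →* Mp :=
  PushoutI.lift Fac.toMp _ (Fac.toMp_comp_fam h₁ h₂)

theorem pushoutToMp_of_gen (b : Bool) :
    pushoutToMp h₁ h₂ (PushoutI.of b (Fac.gen b)) = PresentedGroup.of b :=
  (PushoutI.lift_of _ _ _ _).trans (Fac.toMp_gen b)

def mpToPushout : Mp →* PushoutI (fam φ₁ φ₂) :=
  PresentedGroup.toGroup (f := fun b => PushoutI.of b (Fac.gen b)) <| by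
    rintro r (rfl | rfl)
    · rw [map_pow, FreeGroup.lift_apply_of, ← map_pow]
      exact map_one _
    · rw [map_mul, map_inv, map_pow, map_pow, FreeGroup.lift_apply_of, FreeGroup.lift_apply_of,
        pushoutI_of_gen_true_sq h₁ h₂, mul_inv_cancel]

theorem mpToPushout_of (b : Bool) :
    mpToPushout h₁ h₂ (PresentedGroup.of b) = PushoutI.of b (Fac.gen b) :=
  PresentedGroup.toGroup.of _

theorem mpToPushout_comp_pushoutToMp :
    (mpToPushout h₁ h₂).comp (pushoutToMp h₁ h₂) = MonoidHom.id _ :=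
  PushoutI.hom_ext_nonempty fun b => Fac.hom_ext <| by
    simp only [MonoidHom.comp_apply, pushoutToMp_of_gen, mpToPushout_of, MonoidHom.id_apply]

theorem pushoutToMp_comp_mpToPushout :
    (pushoutToMp h₁ h₂).comp (mpToPushout h₁ h₂) = MonoidHom.id _ :=
  PresentedGroup.ext fun b => by
    simp only [MonoidHom.comp_apply, pushoutToMp_of_gen, mpToPushout_of, MonoidHom.id_apply]

end Pushout

theorem mp2z_is_amalgamated_product_general
    (φ₁ : Multiplicative (ZMod 4) →* Multiplicative (ZMod 12))
    (φ₂ : Multiplicative (ZMod 4) →* Multiplicative (ZMod 8))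
    (h₁ : φ₁ (Multiplicative.ofAdd (1 : ZMod 4)) = Multiplicative.ofAdd (3 : ZMod 12))
    (h₂ : φ₂ (Multiplicative.ofAdd (1 : ZMod 4)) = Multiplicative.ofAdd (2 : ZMod 8)) :
    ∃ Ψ : Monoid.PushoutI (fam φ₁ φ₂) ≃* Mp,
      Ψ (Monoid.PushoutI.of (φ := fam φ₁ φ₂) false (Multiplicative.ofAdd (1 : ZMod 12))) = uhat ∧
      Ψ (Monoid.PushoutI.of (φ := fam φ₁ φ₂) true (Multiplicative.ofAdd (1 : ZMod 8))) = shat :=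
  ⟨(pushoutToMp h₁ h₂).toMulEquiv (mpToPushout h₁ h₂) (mpToPushout_comp_pushoutToMp h₁ h₂)
      (pushoutToMp_comp_mpToPushout h₁ h₂),
    pushoutToMp_of_gen h₁ h₂ false, pushoutToMp_of_gen h₁ h₂ true⟩

/-- `Mp(2,ℤ)` is the amalgamated free product `(ℤ/12ℤ) *_{ℤ/4ℤ} (ℤ/8ℤ)`, via an
isomorphism sending the generator of `ℤ/12ℤ` to `û` and the generator of `ℤ/8ℤ` to `ŝ`. -/
theorem mp2z_is_amalgamated_product
    (φ₁ : Multiplicative (ZMod 4) →* Multiplicative (ZMod 12))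
    (φ₂ : Multiplicative (ZMod 4) →* Multiplicative (ZMod 8))
    (hφ₁ : Function.Injective φ₁) (hφ₂ : Function.Injective φ₂)
    (h₁ : φ₁ (Multiplicative.ofAdd (1 : ZMod 4)) = Multiplicative.ofAdd (3 : ZMod 12))
    (h₂ : φ₂ (Multiplicative.ofAdd (1 : ZMod 4)) = Multiplicative.ofAdd (2 : ZMod 8)) :
    ∃ Ψ : Monoid.PushoutI (fam φ₁ φ₂) ≃* Mp,
      Ψ (Monoid.PushoutI.of (φ := fam φ₁ φ₂) false (Multiplicative.ofAdd (1 : ZMod 12))) = uhat ∧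
      Ψ (Monoid.PushoutI.of (φ := fam φ₁ φ₂) true (Multiplicative.ofAdd (1 : ZMod 8))) = shat :=
  mp2z_is_amalgamated_product_general φ₁ φ₂ h₁ h₂
end

section
/- There is a unique group homomorphism π : Mp(2,ℤ) → SL(2,ℤ) with π(û) = U and π(ŝ) = S; this π is surjective, and its kernel is the two-element central subgroup {1, ŝ⁴} of Mp(2,ℤ). (Thus Mp(2,ℤ) is a central extension of SL(2,ℤ) by ℤ/2ℤ.) -/
/-!
Modulo the central element `ŝ²`, which `π` sends to `-1`, the generator `ŝ` has order 2 and `û`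
order 3, so every element of `Mp(2,ℤ)` can be written `ŝⁿ w ŝᵐ` with `w` a product of the letters
`ŝ⁻¹û` and `ŝ⁻¹û²`, which `π` sends to `!![1,1;0,1]` and `!![1,0;1,1]`. A nonempty product of
these matrices has nonnegative entries and positive off-diagonal sum, so it is none of the powers
`±1, ±S` of `S`. Hence `π g = 1` forces `w = 1` and `g = ŝᵏ` with `Sᵏ = 1`, i.e. `4 ∣ k`, and
`ŝ⁸ = 1` leaves `g ∈ {1, ŝ⁴}`. Surjectivity follows from `SL(2,ℤ) = ⟨S, T⟩` with `T = S⁻¹U`, and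
`ŝ⁴ ≠ 1` is detected by the character `ŝ ↦ 1`, `û ↦ 6` to `ℤ/8ℤ`.
-/

open scoped MatrixGroups

def IsNonnegOffDiagPos (A : Matrix (Fin 2) (Fin 2) ℤ) : Prop :=
  0 ≤ A 0 0 ∧ 0 ≤ A 0 1 ∧ 0 ≤ A 1 0 ∧ 0 ≤ A 1 1 ∧ 0 < A 0 1 + A 1 0

theorem isNonnegOffDiagPos_cond (b : Bool) :
    IsNonnegOffDiagPos (cond b !![1, 0; 1, 1] !![1, 1; 0, 1]) := by
  unfold IsNonnegOffDiagPos; cases b <;> decide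

theorem IsNonnegOffDiagPos.cond_mul {A : Matrix (Fin 2) (Fin 2) ℤ} (hA : IsNonnegOffDiagPos A)
    (b : Bool) : IsNonnegOffDiagPos (cond b !![1, 0; 1, 1] !![1, 1; 0, 1] * A) := by
  obtain ⟨h00, h01, h10, h11, hpos⟩ := hA
  cases b <;> simp [IsNonnegOffDiagPos, Matrix.mul_apply, Fin.sum_univ_two] <;> omega

theorem not_isNonnegOffDiagPos_S_zpow (k : ℤ) : ¬ IsNonnegOffDiagPos (S ^ k : SL(2, ℤ)) := by
  rw [zpow_eq_zpow_emod' k (show S ^ 4 = 1 by decide)]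
  have h0 := Int.emod_nonneg k (by norm_num : ((4 : ℕ) : ℤ) ≠ 0)
  have h4 := Int.emod_lt_of_pos k (by norm_num : (0 : ℤ) < (4 : ℕ))
  generalize k % ((4 : ℕ) : ℤ) = r at h0 h4
  unfold IsNonnegOffDiagPos
  interval_cases r <;> decide

theorem orderOf_S : orderOf S = 4 :=
  orderOf_eq_prime_pow (p := 2) (n := 1) (by decide) (by decide)

namespace Mp

section lift

variable {G : Type*} [Group G]

theorem lift_eq_one_of_mem_mpRels {u s : G} (h8 : s ^ 8 = 1) (h23 : s ^ 2 = u ^ 3) :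
    ∀ r ∈ mpRels, FreeGroup.lift (fun b => cond b s u) r = 1 := by
  rintro r (rfl | rfl) <;> simp [h8, h23]

def lift (u s : G) (h8 : s ^ 8 = 1) (h23 : s ^ 2 = u ^ 3) : Mp →* G :=
  PresentedGroup.toGroup (lift_eq_one_of_mem_mpRels h8 h23)

variable {u s : G} {h8 : s ^ 8 = 1} {h23 : s ^ 2 = u ^ 3}

@[simp]
theorem lift_uhat : lift u s h8 h23 uhat = u := PresentedGroup.toGroup.of _

@[simp]
theorem lift_shat : lift u s h8 h23 shat = s := PresentedGroup.toGroup.of _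

theorem hom_ext {φ ψ : Mp →* G} (hu : φ uhat = ψ uhat) (hs : φ shat = ψ shat) : φ = ψ :=
  PresentedGroup.ext fun b => by cases b; exacts [hu, hs]

end lift

theorem shat_pow_eight : shat ^ 8 = 1 :=
  (map_pow _ _ _).symm.trans (PresentedGroup.one_of_mem (Set.mem_insert _ _))

theorem shat_sq_eq_uhat_pow_three : shat ^ 2 = uhat ^ 3 :=
  mul_inv_eq_one.1 <| by
    have := PresentedGroup.one_of_mem (rels := mpRels) (Set.mem_insert_of_mem _ rfl)
    rwa [map_mul, map_inv, map_pow, map_pow] at this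

theorem shat_sq_mem_center : shat ^ 2 ∈ Subgroup.center Mp := by
  have hconj : (MulAut.conj (shat ^ 2)).toMonoidHom = MonoidHom.id Mp :=
    hom_ext (show shat ^ 2 * uhat * (shat ^ 2)⁻¹ = uhat by rw [shat_sq_eq_uhat_pow_three]; group)
      (show shat ^ 2 * shat * (shat ^ 2)⁻¹ = shat by group)
  refine Subgroup.mem_center_iff.2 fun g => ?_
  have := DFunLike.congr_fun hconj g
  simp only [MulEquiv.toMonoidHom_eq_coe, MonoidHom.coe_coe, MulAut.conj_apply,
    MonoidHom.id_apply, mul_inv_eq_iff_eq_mul] at this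
  exact this.symm

theorem commute_shat_zpow_two_mul (g : Mp) (k : ℤ) : Commute g (shat ^ (2 * k)) := by
  rw [zpow_mul, zpow_two, ← pow_two]
  exact Subgroup.mem_center_iff.1 (zpow_mem shat_sq_mem_center k) g

theorem shat_pow_four_ne_one : shat ^ 4 ≠ 1 := fun h => by
  have := congrArg (lift (Multiplicative.ofAdd (6 : ZMod 8)) (.ofAdd 1) (by decide) (by decide)) h
  rw [map_pow, lift_shat, MonoidHom.map_one] at this
  exact absurd this (by decide)

def toSL : Mp →* SL(2, ℤ) := lift U S (by decide) (by decide)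

theorem toSL_uhat : toSL uhat = U := lift_uhat

theorem toSL_shat : toSL shat = S := lift_shat

theorem toSL_surjective : Function.Surjective toSL := by
  rw [← MonoidHom.range_eq_top, eq_top_iff, ← SpecialLinearGroup.SL2Z_generators,
    Subgroup.closure_le]
  rintro _ (rfl | rfl)
  · exact ⟨shat, toSL_shat⟩
  · exact ⟨shat⁻¹ * uhat, by rw [map_mul, map_inv, toSL_shat, toSL_uhat]; decide⟩

def letter : Bool → Mp
  | false => shat⁻¹ * uhat
  | true => shat⁻¹ * uhat ^ 2

def word : List Bool → Mp
  | [] => 1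
  | b :: l => letter b * word l

def HasNormalForm (g : Mp) : Prop :=
  ∃ (n : ℤ) (l : List Bool) (m : ℤ), g = shat ^ n * word l * shat ^ m

theorem HasNormalForm.zpow_mul_mul_zpow {g : Mp} (hg : HasNormalForm g) (a b : ℤ) :
    HasNormalForm (shat ^ a * g * shat ^ b) := by
  obtain ⟨n, l, m, rfl⟩ := hg
  exact ⟨a + n, l, m + b, by group⟩

theorem hasNormalForm_uhat_mul_word (l : List Bool) : HasNormalForm (uhat * word l) :=
  ⟨1, false :: l, 0, by simp only [word, letter]; group⟩

theorem hasNormalForm_uhat_mul_shat_mul_word (l : List Bool) :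
    HasNormalForm (uhat * shat * word l) := by
  rcases l with _ | ⟨_ | _, l⟩
  · exact ⟨1, [false], 1, by simp only [word, letter]; group⟩
  · exact ⟨1, true :: l, 0, by simp only [word, letter, pow_two]; group⟩
  · exact ⟨2, l, 0, by rw [zpow_ofNat, shat_sq_eq_uhat_pow_three]; simp only [word, letter]; group⟩

theorem HasNormalForm.uhat_mul {g : Mp} (hg : HasNormalForm g) : HasNormalForm (uhat * g) := by
  obtain ⟨n, l, m, rfl⟩ := hg
  obtain ⟨k, rfl | rfl⟩ := Int.even_or_odd' n
  · convert (hasNormalForm_uhat_mul_word l).zpow_mul_mul_zpow (2 * k) m using 1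
    rw [← mul_assoc, ← mul_assoc, (commute_shat_zpow_two_mul uhat k).eq]
    group
  · convert (hasNormalForm_uhat_mul_shat_mul_word l).zpow_mul_mul_zpow (2 * k) m using 1
    rw [zpow_add_one, ← mul_assoc, ← mul_assoc, ← mul_assoc, (commute_shat_zpow_two_mul uhat k).eq]
    group

theorem hasNormalForm (g : Mp) : HasNormalForm g := by
  have hg : g ∈ Subgroup.closure (Set.range PresentedGroup.of) := by
    rw [PresentedGroup.closure_range_of]; trivial
  induction hg using Subgroup.closure_induction_left with
  | one => exact ⟨0, [], 0, by simp [word]⟩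
  | mul_left x hx y _ hy =>
    obtain ⟨_ | _, rfl⟩ := hx
    · exact hy.uhat_mul
    · change HasNormalForm (shat * y)
      simpa using hy.zpow_mul_mul_zpow 1 0
  | inv_mul_cancel x hx y _ hy =>
    obtain ⟨_ | _, rfl⟩ := hx
    · convert hy.uhat_mul.uhat_mul.zpow_mul_mul_zpow (-2) 0 using 1
      change uhat⁻¹ * y = _
      rw [zpow_neg, zpow_ofNat, shat_sq_eq_uhat_pow_three]
      group
    · change HasNormalForm (shat⁻¹ * y)
      simpa using hy.zpow_mul_mul_zpow (-1) 0

theorem coe_toSL_letter (b : Bool) :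
    (toSL (letter b) : Matrix (Fin 2) (Fin 2) ℤ) = cond b !![1, 0; 1, 1] !![1, 1; 0, 1] := by
  cases b <;> simp only [letter, map_mul, map_inv, map_pow, toSL_shat, toSL_uhat] <;> decide

theorem isNonnegOffDiagPos_toSL_word (b : Bool) (l : List Bool) :
    IsNonnegOffDiagPos (toSL (word (b :: l))) := by
  induction l generalizing b with
  | nil => simpa [word, coe_toSL_letter] using isNonnegOffDiagPos_cond b
  | cons b' l ih =>
    rw [word, map_mul, Matrix.SpecialLinearGroup.coe_mul, coe_toSL_letter]
    exact (ih b').cond_mul b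

theorem eq_nil_of_toSL_word_eq_S_zpow {l : List Bool} {k : ℤ} (h : toSL (word l) = S ^ k) :
    l = [] := by
  cases l with
  | nil => rfl
  | cons b l =>
    exact absurd (h ▸ isNonnegOffDiagPos_toSL_word b l) (not_isNonnegOffDiagPos_S_zpow k)

theorem shat_zpow_eq_one_or_eq_pow_four {k : ℤ} (hk : 4 ∣ k) :
    shat ^ k = 1 ∨ shat ^ k = shat ^ 4 := by
  rw [zpow_eq_zpow_emod' k shat_pow_eight]
  have : k % 8 = 0 ∨ k % 8 = 4 := by omega
  rcases this with h | h <;> simp [h]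

theorem eq_one_or_eq_shat_pow_four_of_toSL_eq_one {g : Mp} (hg : toSL g = 1) :
    g = 1 ∨ g = shat ^ 4 := by
  obtain ⟨n, l, m, rfl⟩ := hasNormalForm g
  rw [map_mul, map_mul, map_zpow, map_zpow, toSL_shat] at hg
  have hword : toSL (word l) = S ^ (-n - m) :=
    calc toSL (word l) = S ^ (-n) * (S ^ n * toSL (word l) * S ^ m) * S ^ (-m) := by group
      _ = S ^ (-n - m) := by rw [hg]; group
  obtain rfl := eq_nil_of_toSL_word_eq_S_zpow hword
  rw [word, map_one, mul_one, ← zpow_add, ← orderOf_dvd_iff_zpow_eq_one, orderOf_S] at hg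
  rw [word, mul_one, ← zpow_add]
  exact shat_zpow_eq_one_or_eq_pow_four (by exact_mod_cast hg)

theorem ker_toSL : (toSL.ker : Set Mp) = {1, shat ^ 4} := by
  ext g
  simp only [SetLike.mem_coe, MonoidHom.mem_ker, Set.mem_insert_iff, Set.mem_singleton_iff]
  refine ⟨eq_one_or_eq_shat_pow_four_of_toSL_eq_one, ?_⟩
  rintro (rfl | rfl)
  · exact map_one toSL
  · rw [map_pow, toSL_shat]; decide

end Mp

open Mp in
/-- There is a unique homomorphism `π : Mp(2,ℤ) → SL(2,ℤ)` with `π(û) = U` and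
`π(ŝ) = S`; it is surjective and its kernel is the two-element central subgroup
`{1, ŝ⁴}`, so `Mp(2,ℤ)` is a central extension of `SL(2,ℤ)` by `ℤ/2ℤ`. -/
theorem mp2z_covers_sl2z :
    ∃ π : Mp →* Matrix.SpecialLinearGroup (Fin 2) ℤ,
      π uhat = U ∧ π shat = S ∧
      (∀ π' : Mp →* Matrix.SpecialLinearGroup (Fin 2) ℤ,
        π' uhat = U → π' shat = S → π' = π) ∧
      Function.Surjective π ∧
      (π.ker : Set Mp) = {1, shat ^ 4} ∧
      shat ^ 4 ≠ 1 ∧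
      shat ^ 4 ∈ Subgroup.center Mp := by
  refine ⟨toSL, toSL_uhat, toSL_shat, fun π' hu hs => hom_ext (hu.trans toSL_uhat.symm)
    (hs.trans toSL_shat.symm), toSL_surjective, ker_toSL, shat_pow_four_ne_one, ?_⟩
  simpa [← pow_mul] using pow_mem shat_sq_mem_center 2
end

section
/- The abelianization of SL(2,ℤ) is cyclic of order 12: there is a group isomorphism Abelianization SL(2,ℤ) ≃ ℤ/12ℤ taking the class of T = !![1,1; 0,1] to a generator. -/
/-!
In `SL(2,ℤ)` we have `S⁴ = 1` and `(ST)³ = S²`, so in the abelianization the classes `s`, `t`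
of `S`, `T` satisfy `t³ = s⁻¹`. As `S` and `T` generate `SL(2,ℤ)`, the abelianization is cyclic,
generated by `t`, and `t¹² = 1`. Conversely, reducing mod 3 and mod 4 and composing with
characters of the finite groups `SL(2,ℤ/3)` and `SL(2,ℤ/4)` that send `T` to `1` shows that `3`
and `4` divide the order of `t`. So the abelianization is cyclic of order 12, and any isomorphism
with `ℤ/12` sends the generator `t` to a generator.
-/

/-- The matrix `T = !![1,1; 0,1]` as an element of `SL(2,ℤ)`. -/
def T : Matrix.SpecialLinearGroup (Fin 2) ℤ :=
  ⟨!![1, 1; 0, 1], by norm_num [Matrix.det_fin_two_of]⟩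

open Matrix MatrixGroups Subgroup Multiplicative

lemma Abelianization.of_surjective {G : Type*} [Group G] :
    Function.Surjective (Abelianization.of : G →* Abelianization G) :=
  QuotientGroup.mk'_surjective _

lemma zpowers_map_eq_top_of_surjective {G H : Type*} [Group G] [Group H] {f : G →* H}
    (hf : Function.Surjective f) {g : G} (hg : zpowers g = ⊤) : zpowers (f g) = ⊤ := by
  rw [← MonoidHom.map_zpowers, hg, map_top_of_surjective f hf]

lemma dvd_orderOf_of_map_eq_ofAdd_one {G : Type*} [Group G] {n : ℕ}
    (χ : G →* Multiplicative (ZMod n)) {g : G} (hg : χ g = ofAdd 1) : n ∣ orderOf g := by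
  simpa [hg, orderOf_ofAdd_eq_addOrderOf, ZMod.addOrderOf_one] using orderOf_map_dvd χ g

/- Each polynomial interpolates, on the finite group, the character with `T ↦ 1` and `S ↦ -3`
(as forced by `t³ = s⁻¹`); multiplicativity is verified over all pairs of elements. -/

set_option maxRecDepth 100000 in
def charSL2ZMod3 : SL(2, ZMod 3) →* Multiplicative (ZMod 3) :=
  MonoidHom.mk'
    (fun g ↦ ofAdd (g 1 0 * g 1 1 + g 0 1 * g 1 1 + 2 * g 0 1 * g 1 0 ^ 2 * g 1 1 + g 0 0 * g 1 0))
    (by decide)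

set_option maxRecDepth 1000000 in
def charSL2ZMod4 : SL(2, ZMod 4) →* Multiplicative (ZMod 4) :=
  MonoidHom.mk'
    (fun g ↦ ofAdd (1 + g 0 1 * g 1 1 + g 0 1 * g 1 0 + g 0 1 * g 1 0 * g 1 1
      + g 0 1 * g 1 0 ^ 2 + g 0 0 * g 1 0 + 2 * g 1 0 + 3 * g 1 1))
    (by decide)

namespace ModularGroup

lemma S_pow_four : S ^ 4 = 1 := by
  decide

lemma S_mul_T_pow_three : (S * T) ^ 3 = S ^ 2 := by
  decide

lemma charSL2ZMod3_map_T : charSL2ZMod3 (SpecialLinearGroup.map (Int.castRingHom _) T) = ofAdd 1 :=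
  rfl

lemma charSL2ZMod4_map_T : charSL2ZMod4 (SpecialLinearGroup.map (Int.castRingHom _) T) = ofAdd 1 :=
  rfl

lemma abelianization_of_T_pow_three : Abelianization.of T ^ 3 = (Abelianization.of S)⁻¹ := by
  have h := congrArg Abelianization.of S_mul_T_pow_three
  rw [map_pow, map_mul, mul_pow, map_pow] at h
  rw [eq_inv_iff_mul_eq_one]
  apply mul_left_cancel (a := Abelianization.of S ^ 2)
  rw [← mul_assoc, mul_right_comm, ← pow_succ, h, mul_one]

lemma abelianization_of_T_pow_twelve : Abelianization.of T ^ 12 = 1 := by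
  rw [show 12 = 3 * 4 from rfl, pow_mul, abelianization_of_T_pow_three, inv_pow, ← map_pow,
    S_pow_four, map_one, inv_one]

lemma zpowers_abelianization_of_T_eq_top : zpowers (Abelianization.of T) = ⊤ := by
  rw [eq_top_iff, ← map_top_of_surjective _ Abelianization.of_surjective,
    ← SpecialLinearGroup.SL2Z_generators, MonoidHom.map_closure, closure_le, Set.image_pair,
    Set.insert_subset_iff, Set.singleton_subset_iff]
  refine ⟨?_, mem_zpowers _⟩
  rw [← inv_inv (Abelianization.of S), ← abelianization_of_T_pow_three]
  exact inv_mem (pow_mem (mem_zpowers _) 3)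

lemma dvd_orderOf_abelianization_of_T {n : ℕ} (χ : SL(2, ZMod n) →* Multiplicative (ZMod n))
    (hχ : χ (SpecialLinearGroup.map (Int.castRingHom _) T) = ofAdd 1) :
    n ∣ orderOf (Abelianization.of T) :=
  dvd_orderOf_of_map_eq_ofAdd_one (Abelianization.lift (χ.comp (SpecialLinearGroup.map _)))
    (by rwa [Abelianization.lift_apply_of])

lemma orderOf_abelianization_of_T : orderOf (Abelianization.of T) = 12 :=
  Nat.dvd_antisymm (orderOf_dvd_of_pow_eq_one abelianization_of_T_pow_twelve) <|
    Nat.Coprime.mul_dvd_of_dvd_of_dvd (by norm_num : Nat.Coprime 3 4)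
      (dvd_orderOf_abelianization_of_T _ charSL2ZMod3_map_T)
      (dvd_orderOf_abelianization_of_T _ charSL2ZMod4_map_T)

end ModularGroup

/-- The abelianization of `SL(2,ℤ)` is cyclic of order `12`: there is an isomorphism
onto `ℤ/12ℤ` taking the class of `T` to a generator. -/
theorem abelianization_sl2z :
    ∃ Ψ : Abelianization (Matrix.SpecialLinearGroup (Fin 2) ℤ) ≃* Multiplicative (ZMod 12),
      Subgroup.zpowers (Ψ (Abelianization.of T)) = ⊤ := by
  have hgen := ModularGroup.zpowers_abelianization_of_T_eq_top
  have : IsCyclic (Abelianization SL(2, ℤ)) := isCyclic_iff_exists_zpowers_eq_top.mpr ⟨_, hgen⟩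
  have hcard : Nat.card (Abelianization SL(2, ℤ)) = Nat.card (Multiplicative (ZMod 12)) := by
    rw [← orderOf_eq_card_of_zpowers_eq_top hgen, ModularGroup.orderOf_abelianization_of_T]
    simp
  let Ψ := mulEquivOfCyclicCardEq hcard
  exact ⟨Ψ, zpowers_map_eq_top_of_surjective (f := Ψ.toMonoidHom) Ψ.surjective hgen⟩
end

section
/- There are integers m₁ and m₂ such that −(1/((2i)³·4)) · Σ_{ℓ=1}^{3} e^{−3πiℓ/4}/sin(πℓ/4)³ = −3/32 + m₁ and −(1/((2i)³·4)) · Σ_{ℓ=1}^{3} e^{−3πiℓ/4}·(6cos(πℓ/2) − 1)/sin(πℓ/4)³ = −3/32 + m₂. (This is the statement that on the lens space L̃⁵₄ — the lens space L⁵₄(1,1,1) with its other Spin-ℤ/8ℤ structure, i.e., charge q = 3/2 — one has η^D_{3/2} ≡ −3/32 and η^RS_{3/2} ≡ −3/32 (mod ℤ).) -/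
/-!
With `ζ = e^{-3πi/4} = -(1 + i)·√2/2` the summands are `ζ^ℓ / sin(πℓ/4)³`, and `ζ² = i`.
Since `sin(π/4)³ = sin(3π/4)³ = √2/4` and `sin(π/2) = 1`, both sums over `ℓ = 1, 2, 3` come out
as exactly `-3i` (the Rarita–Schwinger weights `6 cos(πℓ/2) - 1` are `-1, -7, -1`), and the
prefactor `-1/((2i)³·4) = -i/32` turns `-3i` into `-3/32`: both congruences hold with `m₁ = m₂ = 0`.
-/

open Complex

lemma Finset.sum_Icc_one_three {M : Type*} [AddCommMonoid M] (f : ℕ → M) :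
    ∑ ℓ ∈ Finset.Icc 1 3, f ℓ = f 1 + f 2 + f 3 := by
  rw [show Finset.Icc 1 3 = {1, 2, 3} by decide, Finset.sum_insert (by decide),
    Finset.sum_pair (by decide), add_assoc]

lemma ofReal_sqrt_two_sq : ((√2 : ℝ) : ℂ) ^ 2 = 2 := by
  rw [← ofReal_pow, Real.sq_sqrt zero_le_two, ofReal_ofNat]

lemma exp_neg_three_pi_mul_I_div_four :
    exp (-(3 * (Real.pi : ℂ)) * I / 4) = -(1 + I) * ((√2 : ℝ) / 2 : ℂ) := by
  have harg : -(3 * (Real.pi : ℂ)) * I / 4 = ((-(Real.pi - Real.pi / 4) : ℝ) : ℂ) * I := by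
    push_cast; ring
  rw [harg, exp_mul_I, ← ofReal_cos, ← ofReal_sin, Real.cos_neg, Real.sin_neg, Real.cos_pi_sub,
    Real.sin_pi_sub, Real.cos_pi_div_four, Real.sin_pi_div_four]
  push_cast; ring

lemma exp_neg_three_pi_mul_I_mul_nat_div_four (ℓ : ℕ) :
    exp (-(3 * (Real.pi : ℂ)) * I * ℓ / 4) = (-(1 + I) * ((√2 : ℝ) / 2 : ℂ)) ^ ℓ := by
  rw [← exp_neg_three_pi_mul_I_div_four, ← exp_nat_mul]
  ring_nf

lemma ofReal_sin_pi_mul_div_four :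
    ((Real.sin (Real.pi * 1 / 4) : ℝ) : ℂ) = (√2 : ℝ) / 2 ∧
    ((Real.sin (Real.pi * 2 / 4) : ℝ) : ℂ) = 1 ∧
    ((Real.sin (Real.pi * 3 / 4) : ℝ) : ℂ) = (√2 : ℝ) / 2 := by
  refine ⟨?_, ?_, ?_⟩
  · rw [mul_one, Real.sin_pi_div_four]; push_cast; ring
  · rw [show Real.pi * 2 / 4 = Real.pi / 2 by ring, Real.sin_pi_div_two, ofReal_one]
  · rw [show Real.pi * 3 / 4 = Real.pi - Real.pi / 4 by ring, Real.sin_pi_sub,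
      Real.sin_pi_div_four]; push_cast; ring

lemma ofReal_cos_pi_mul_div_two :
    ((Real.cos (Real.pi * 1 / 2) : ℝ) : ℂ) = 0 ∧
    ((Real.cos (Real.pi * 2 / 2) : ℝ) : ℂ) = -1 ∧
    ((Real.cos (Real.pi * 3 / 2) : ℝ) : ℂ) = 0 := by
  refine ⟨?_, ?_, ?_⟩
  · rw [mul_one, Real.cos_pi_div_two, ofReal_zero]
  · rw [show Real.pi * 2 / 2 = Real.pi by ring, Real.cos_pi, ofReal_neg, ofReal_one]
  · rw [show Real.pi * 3 / 2 = Real.pi / 2 + Real.pi by ring, Real.cos_add_pi,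
      Real.cos_pi_div_two]; simp

lemma neg_one_add_I_mul_sqrt_two_div_two_sq : (-(1 + I) * ((√2 : ℝ) / 2 : ℂ)) ^ 2 = I := by
  linear_combination (((√2 : ℝ) : ℂ) ^ 2 / 4) * I_sq + (I / 2) * ofReal_sqrt_two_sq

lemma pow_three_eq_mul_of_sq_eq {M : Type*} [Monoid M] {z w : M} (hz : z ^ 2 = w) :
    z ^ 3 = w * z := by
  rw [pow_succ, hz]

lemma sum_dirac_summands_eq :
    ∑ ℓ ∈ Finset.Icc (1 : ℕ) 3,
        exp (-(3 * (Real.pi : ℂ)) * I * (ℓ : ℂ) / 4) / ((Real.sin (Real.pi * (ℓ : ℝ) / 4) : ℂ)) ^ 3 =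
      -3 * I := by
  obtain ⟨hs1, hs2, hs3⟩ := ofReal_sin_pi_mul_div_four
  have hζ2 := neg_one_add_I_mul_sqrt_two_div_two_sq
  simp only [Finset.sum_Icc_one_three, exp_neg_three_pi_mul_I_mul_nat_div_four, Nat.cast_one,
    Nat.cast_ofNat, hs1, hs2, hs3, pow_one, pow_three_eq_mul_of_sq_eq hζ2, hζ2]
  have hsqrt : ((√2 : ℝ) : ℂ) ≠ 0 := by simp
  field_simp
  linear_combination 4 * I * ofReal_sqrt_two_sq - 4 * I_sq

lemma sum_rarita_schwinger_summands_eq :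
    ∑ ℓ ∈ Finset.Icc (1 : ℕ) 3,
        exp (-(3 * (Real.pi : ℂ)) * I * (ℓ : ℂ) / 4) *
            (6 * (Real.cos (Real.pi * (ℓ : ℝ) / 2) : ℂ) - 1) /
          ((Real.sin (Real.pi * (ℓ : ℝ) / 4) : ℂ)) ^ 3 =
      -3 * I := by
  obtain ⟨hs1, hs2, hs3⟩ := ofReal_sin_pi_mul_div_four
  obtain ⟨hc1, hc2, hc3⟩ := ofReal_cos_pi_mul_div_two
  have hζ2 := neg_one_add_I_mul_sqrt_two_div_two_sq
  simp only [Finset.sum_Icc_one_three, exp_neg_three_pi_mul_I_mul_nat_div_four, Nat.cast_one,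
    Nat.cast_ofNat, hs1, hs2, hs3, hc1, hc2, hc3, pow_one, pow_three_eq_mul_of_sq_eq hζ2, hζ2]
  have hsqrt : ((√2 : ℝ) : ℂ) ≠ 0 := by simp
  field_simp
  linear_combination -4 * I * ofReal_sqrt_two_sq + 4 * I_sq

lemma neg_one_div_two_I_pow_three_mul_four_mul_neg_three_I :
    -(1 / ((2 * I) ^ 3 * 4)) * (-3 * I) = -(3 / 32) := by
  field_simp
  ring_nf
  simp

/-- On the lens space `L̃⁵₄` (i.e. `L⁵₄(1,1,1)` with its other Spin-ℤ/8ℤ structure,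
charge `q = 3/2`) one has `η^D_{3/2} ≡ −3/32` and `η^RS_{3/2} ≡ −3/32` modulo `ℤ`. -/
theorem eta_L5_4_tilde : ∃ m₁ m₂ : ℤ,
    -(1 / ((2 * Complex.I) ^ 3 * 4)) *
        ∑ ℓ ∈ Finset.Icc (1 : ℕ) 3,
          Complex.exp (-(3 * (Real.pi : ℂ)) * Complex.I * (ℓ : ℂ) / 4) /
            ((Real.sin (Real.pi * (ℓ : ℝ) / 4) : ℂ)) ^ 3 =
      -(3 / 32) + (m₁ : ℂ) ∧
    -(1 / ((2 * Complex.I) ^ 3 * 4)) *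
        ∑ ℓ ∈ Finset.Icc (1 : ℕ) 3,
          Complex.exp (-(3 * (Real.pi : ℂ)) * Complex.I * (ℓ : ℂ) / 4) *
              (6 * (Real.cos (Real.pi * (ℓ : ℝ) / 2) : ℂ) - 1) /
            ((Real.sin (Real.pi * (ℓ : ℝ) / 4) : ℂ)) ^ 3 =
      -(3 / 32) + (m₂ : ℂ) := by
  refine ⟨0, 0, ?_, ?_⟩
  · rw [sum_dirac_summands_eq, neg_one_div_two_I_pow_three_mul_four_mul_neg_three_I]; simp
  · rw [sum_rarita_schwinger_summands_eq, neg_one_div_two_I_pow_three_mul_four_mul_neg_three_I]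
    simp
end

section
/- There are integers m₁ and m₂ such that −(1/((2i)³·3)) · Σ_{ℓ=1}^{2} e^{−πiℓ/3}/(sin(πℓ/3)·sin(−πℓ/3)·sin(πℓ/3)) = 1/9 + m₁ and −(1/((2i)³·3)) · Σ_{ℓ=1}^{2} e^{−πiℓ/3}/sin(πℓ/3)³ = −1/9 + m₂. (This is the statement that η^D_{1/2}(L⁵₃(1,−1,1)) ≡ 1/9 and η^D_{1/2}(L⁵₃(1,1,1)) ≡ −1/9 (mod ℤ); consequently 8·[L⁵₃(1,−1,1)] and [L⁵₃(1,1,1)] have the same value of this ℤ/9ℤ-valued bordism invariant.) -/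
/-! For `ℓ = 1, 2` both `sin (πℓ/3)` equal `√3/2`, so in each sum the denominator is the constant
`∓(√3/2)³` and can be pulled out. The numerators add up to `e^{-πi/3} + e^{-2πi/3} = -√3 i`, and
then both η-values are exactly `±1/9`, so `m₁ = m₂ = 0`. -/

open Complex Real Finset

theorem Real.sin_pi_mul_div_three_of_mem_Icc {ℓ : ℕ} (hℓ : ℓ ∈ Icc 1 2) :
    Real.sin (π * ℓ / 3) = √3 / 2 := by
  obtain rfl | rfl : ℓ = 1 ∨ ℓ = 2 := by simp only [mem_Icc] at hℓ; omega
  · simp [Real.sin_pi_div_three]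
  · rw [show π * ((2 : ℕ) : ℝ) / 3 = π - π / 3 by push_cast; ring, Real.sin_pi_sub,
      Real.sin_pi_div_three]

theorem Complex.exp_neg_ofReal_mul_I (x : ℝ) :
    Complex.exp (-(x * I)) = (Real.cos x : ℂ) - (Real.sin x : ℂ) * I := by
  rw [← neg_mul, ← ofReal_neg, exp_mul_I, ← ofReal_cos, ← ofReal_sin, Real.cos_neg,
    Real.sin_neg, ofReal_neg]
  ring

theorem sum_exp_neg_pi_I_mul_div_three :
    ∑ ℓ ∈ Icc (1 : ℕ) 2, Complex.exp (-(π : ℂ) * I * (ℓ : ℂ) / 3) = -(√3 * I) := by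
  have hcos : Real.cos (π * ((2 : ℕ) : ℝ) / 3) = -(1 / 2) := by
    rw [show π * ((2 : ℕ) : ℝ) / 3 = π - π / 3 by push_cast; ring, Real.cos_pi_sub,
      Real.cos_pi_div_three]
  have hexp (ℓ : ℕ) : Complex.exp (-(π : ℂ) * I * (ℓ : ℂ) / 3)
      = (Real.cos (π * ℓ / 3) : ℂ) - (Real.sin (π * ℓ / 3) : ℂ) * I := by
    rw [← Complex.exp_neg_ofReal_mul_I]; push_cast; ring_nf
  rw [show Icc (1 : ℕ) 2 = {1, 2} from rfl, sum_pair (by decide), hexp, hexp,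
    Real.sin_pi_mul_div_three_of_mem_Icc (by decide),
    Real.sin_pi_mul_div_three_of_mem_Icc (by decide), hcos]
  simp only [Nat.cast_one, mul_one, Real.cos_pi_div_three]
  push_cast
  ring

/-- `η^D_{1/2}(L⁵₃(1,−1,1)) ≡ 1/9` and `η^D_{1/2}(L⁵₃(1,1,1)) ≡ −1/9` modulo `ℤ`. -/
theorem eta_L5_3 : ∃ m₁ m₂ : ℤ,
    -(1 / ((2 * Complex.I) ^ 3 * 3)) *
        ∑ ℓ ∈ Finset.Icc (1 : ℕ) 2,
          Complex.exp (-(Real.pi : ℂ) * Complex.I * (ℓ : ℂ) / 3) /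
            ((Real.sin (Real.pi * (ℓ : ℝ) / 3) : ℂ) *
              (Real.sin (-(Real.pi * (ℓ : ℝ)) / 3) : ℂ) *
              (Real.sin (Real.pi * (ℓ : ℝ) / 3) : ℂ)) =
      1 / 9 + (m₁ : ℂ) ∧
    -(1 / ((2 * Complex.I) ^ 3 * 3)) *
        ∑ ℓ ∈ Finset.Icc (1 : ℕ) 2,
          Complex.exp (-(Real.pi : ℂ) * Complex.I * (ℓ : ℂ) / 3) /
            ((Real.sin (Real.pi * (ℓ : ℝ) / 3) : ℂ)) ^ 3 =
      -(1 / 9) + (m₂ : ℂ) := by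
  have hsin {ℓ : ℕ} (hℓ : ℓ ∈ Icc 1 2) : (Real.sin (π * ℓ / 3) : ℂ) = √3 / 2 := by
    rw [Real.sin_pi_mul_div_three_of_mem_Icc hℓ]; push_cast; rfl
  have hsin_neg {ℓ : ℕ} (hℓ : ℓ ∈ Icc 1 2) : (Real.sin (-(π * ℓ) / 3) : ℂ) = -(√3 / 2) := by
    rw [neg_div, Real.sin_neg, ofReal_neg, hsin hℓ]
  have hsqrt : ((√3 : ℝ) : ℂ) ^ 2 = 3 := by norm_cast; exact Real.sq_sqrt (by norm_num)
  refine ⟨0, 0, ?_, ?_⟩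
  · rw [sum_congr rfl fun ℓ hℓ => by rw [hsin hℓ, hsin_neg hℓ], ← sum_div,
      sum_exp_neg_pi_I_mul_div_three]
    field_simp
    rw [Int.cast_zero, I_sq, hsqrt]
    ring
  · rw [sum_congr rfl fun ℓ hℓ => by rw [hsin hℓ], ← sum_div, sum_exp_neg_pi_I_mul_div_three]
    field_simp
    rw [Int.cast_zero, I_sq, hsqrt]
    ring
end

section
/- There is an integer m such that −(2/(4·(−2i)⁴)) · Σ_{ℓ=1}^{3} (e^{3πiℓ/4} − e^{πiℓ/4})·cos(πℓ/4)/sin(πℓ/4)⁴ = 1/4 + m. (This is the statement that the difference η^D_{3/2} − η^D_{1/2} of reduced Dirac η-invariants on the lens space bundle Q⁷₄ is ≡ 1/4 (mod ℤ), the bordism invariant showing Q⁷₄ generates the ℤ/4ℤ summand of Ω₇^{Spin-Mp(2,ℤ)}.) -/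
/-!
Since `e^{3iθ} - e^{iθ} = 2i sin θ e^{2iθ}` and `e^{2iθ} = iˡ` for `θ = πℓ/4`, the `ℓ`-th summand
is `2 i^{ℓ+1} cos θ / sin³ θ`. It vanishes for `ℓ = 2`, and for `ℓ = 1, 3` it equals `-2 / sin²(π/4) = -4`.
The sum is therefore `-8`, and the prefactor `-2 / (4 (-2i)⁴) = -1/32` turns it into `1/4`.
-/

open Complex
open scoped Real

lemma Complex.exp_three_mul_mul_I_sub_exp_mul_I (θ : ℂ) :
    exp (3 * θ * I) - exp (θ * I) = 2 * I * sin θ * exp (2 * θ * I) := by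
  have h1 : exp (θ * I) = exp (-θ * I) * exp (2 * θ * I) := by rw [← exp_add]; ring_nf
  have h3 : exp (3 * θ * I) = exp (θ * I) * exp (2 * θ * I) := by rw [← exp_add]; ring_nf
  rw [show 2 * I * sin θ = I * (2 * sin θ) by ring, two_sin]
  linear_combination h3 - h1 - (exp (-θ * I) - exp (θ * I)) * exp (2 * θ * I) * I_mul_I

lemma Complex.exp_nat_mul_pi_div_two_mul_I (n : ℕ) : exp (n * (π / 2) * I) = I ^ n := by
  rw [mul_assoc, exp_nat_mul, exp_pi_div_two_mul_I]

lemma Real.sin_pi_div_four_sq : Real.sin (π / 4) ^ 2 = 1 / 2 := by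
  rw [Real.sin_sq_eq_half_sub, show 2 * (π / 4) = π / 2 by ring, Real.cos_pi_div_two]
  norm_num

lemma Real.sin_pi_mul_nat_div_four_ne_zero {ℓ : ℕ} (hℓ0 : 0 < ℓ) (hℓ4 : ℓ < 4) :
    Real.sin (π * ℓ / 4) ≠ 0 := by
  have hℓ0' : (0 : ℝ) < ℓ := by exact_mod_cast hℓ0
  have hℓ4' : (ℓ : ℝ) < 4 := by exact_mod_cast hℓ4
  exact (Real.sin_pos_of_pos_of_lt_pi (by positivity) (by nlinarith [Real.pi_pos])).ne'

lemma exp_sub_exp_mul_cos_div_sin_pow_four {ℓ : ℕ} (h : Real.sin (π * ℓ / 4) ≠ 0) :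
    (exp (3 * (π : ℂ) * I * ℓ / 4) - exp ((π : ℂ) * I * ℓ / 4)) *
        (Real.cos (π * ℓ / 4) : ℂ) / (Real.sin (π * ℓ / 4) : ℂ) ^ 4 =
      2 * I ^ (ℓ + 1) * Real.cos (π * ℓ / 4) / (Real.sin (π * ℓ / 4) : ℂ) ^ 3 := by
  set θ : ℝ := π * ℓ / 4
  have h3 : 3 * (π : ℂ) * I * ℓ / 4 = 3 * θ * I := by push_cast [θ]; ring
  have h1 : (π : ℂ) * I * ℓ / 4 = θ * I := by push_cast [θ]; ring
  have h2 : exp (2 * θ * I) = I ^ ℓ := by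
    rw [← exp_nat_mul_pi_div_two_mul_I]; push_cast [θ]; ring_nf
  have hs : (Real.sin θ : ℂ) ≠ 0 := ofReal_ne_zero.mpr h
  rw [h3, h1, exp_three_mul_mul_I_sub_exp_mul_I, h2, ← ofReal_sin]
  field_simp
  ring

lemma sum_I_pow_mul_cos_div_sin_pow_three :
    ∑ ℓ ∈ Finset.Icc (1 : ℕ) 3,
      2 * I ^ (ℓ + 1) * Real.cos (π * ℓ / 4) / (Real.sin (π * ℓ / 4) : ℂ) ^ 3 = -8 := by
  have h1 : π * ((1 : ℕ) : ℝ) / 4 = π / 4 := by push_cast; ring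
  have h2 : π * ((2 : ℕ) : ℝ) / 4 = π / 2 := by push_cast; ring
  have h3 : π * ((3 : ℕ) : ℝ) / 4 = π - π / 4 := by push_cast; ring
  have hcs : Real.cos (π / 4) = Real.sin (π / 4) :=
    Real.cos_pi_div_four.trans Real.sin_pi_div_four.symm
  have hs : (Real.sin (π / 4) : ℂ) ^ 2 = 1 / 2 := by
    rw [← ofReal_pow, Real.sin_pi_div_four_sq]; norm_num
  have hs0 : (Real.sin (π / 4) : ℂ) ≠ 0 := by
    rintro h0; rw [h0] at hs; norm_num at hs
  rw [show Finset.Icc (1 : ℕ) 3 = {1, 2, 3} from rfl, Finset.sum_insert (by decide),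
    Finset.sum_insert (by decide), Finset.sum_singleton, h1, h2, h3, Real.cos_pi_sub,
    Real.sin_pi_sub, Real.cos_pi_div_two, Real.sin_pi_div_two, hcs, ofReal_neg, ofReal_zero,
    ofReal_one, show I ^ (1 + 1) = -1 from I_sq, show I ^ (3 + 1) = 1 from I_pow_four]
  field_simp
  linear_combination 8 * hs

/-- On the lens space bundle `Q⁷₄`, the difference `η^D_{3/2} − η^D_{1/2}` of reduced
Dirac η-invariants equals `1/4` modulo `ℤ`. -/
theorem eta_Q7_4 : ∃ m : ℤ,
    -(2 / (4 * (-(2 * Complex.I)) ^ 4)) *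
        ∑ ℓ ∈ Finset.Icc (1 : ℕ) 3,
          (Complex.exp (3 * (Real.pi : ℂ) * Complex.I * (ℓ : ℂ) / 4) -
              Complex.exp ((Real.pi : ℂ) * Complex.I * (ℓ : ℂ) / 4)) *
              (Real.cos (Real.pi * (ℓ : ℝ) / 4) : ℂ) /
            ((Real.sin (Real.pi * (ℓ : ℝ) / 4) : ℂ)) ^ 4 =
      1 / 4 + (m : ℂ) := by
  refine ⟨0, ?_⟩
  rw [Finset.sum_congr rfl fun ℓ hℓ =>
      have ⟨h1, h3⟩ := Finset.mem_Icc.mp hℓ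
      exp_sub_exp_mul_cos_div_sin_pow_four (Real.sin_pi_mul_nat_div_four_ne_zero h1 (by omega)),
    sum_I_pow_mul_cos_div_sin_pow_three]
  norm_num [mul_pow, I_pow_four]
end
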